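/- For every n ≥ 2 and every 0 ≤ k ≤ n, the number of π ∈ D_n of type '0,≥2' with exactly k D-descents equals the number of π ∈ D_n of type '0,≥2' with exactly n-k D-descents, and likewise the number of π ∈ D_n of type '1' with exactly k D-descents equals the number of π ∈ D_n of type '1' with exactly n-k D-descents; equivalently, D_n^{0,≥2}(t) = t^n·D_n^{0,≥2}(t^{-1}) and D_n^1(t) = t^n·D_n^1(t^{-1}), i.e. both polynomials are palindromic. -/

import Mathlib

/-- A signed permutation of `{1,…,n}`, encoded as an (unsigned) permutation of
`Fin n` together with a choice of sign for each position.  The associated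
word is `π_1 π_2 ⋯ π_n` where `π_j = ± σ(j)`. -/
abbrev SignedPerm (n : ℕ) := Equiv.Perm (Fin n) × (Fin n → Bool)

namespace SignedPerm

/-- The letter `π_j` of the word of `p`, for `1 ≤ j ≤ n` (and `0` otherwise). -/
def word {n : ℕ} (p : SignedPerm n) (j : ℕ) : ℤ :=
  if h : 1 ≤ j ∧ j ≤ n then
    (if p.2 ⟨j - 1, by omega⟩ then -1 else 1) * ((p.1 ⟨j - 1, by omega⟩ : ℕ) + 1)
  else 0

/-- The letter `π_j`, with the type `D` convention `π_0 = -π_2`. -/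
def entry {n : ℕ} (p : SignedPerm n) (j : ℕ) : ℤ :=
  if j = 0 then -(p.word 2) else p.word j

/-- The set of `D`-descents of `p`: those `i ∈ {0,…,n-1}` with `π_i > π_{i+1}`. -/
def ddes {n : ℕ} (p : SignedPerm n) : Finset ℕ :=
  (Finset.range n).filter fun i => p.entry (i + 1) < p.entry i

/-- The number of `D`-descents of `p`. -/
def d {n : ℕ} (p : SignedPerm n) : ℕ := p.ddes.card

/-- Membership in the type `D` Coxeter group `D_n ⊆ B_n`:
the number of negative letters is even. -/
def inD {n : ℕ} (p : SignedPerm n) : Prop :=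
  Even (Finset.univ.filter (fun i => p.2 i = true)).card

/-- Type '1': descent at position `1` but not at `0`. -/
def type1 {n : ℕ} (p : SignedPerm n) : Prop := 1 ∈ p.ddes ∧ 0 ∉ p.ddes

/-- Type '0,1': descents at both positions `0` and `1`. -/
def type01 {n : ℕ} (p : SignedPerm n) : Prop := 0 ∈ p.ddes ∧ 1 ∈ p.ddes

/-- Type '≥2': no descent at positions `0` and `1`. -/
def typeGe2 {n : ℕ} (p : SignedPerm n) : Prop := 0 ∉ p.ddes ∧ 1 ∉ p.ddes

/-- Type '0,≥2': descent at position `0` but not at `1`. -/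
def type0Ge2 {n : ℕ} (p : SignedPerm n) : Prop := 0 ∈ p.ddes ∧ 1 ∉ p.ddes

instance {n : ℕ} (p : SignedPerm n) : Decidable p.inD := by
  unfold SignedPerm.inD; infer_instance
instance {n : ℕ} (p : SignedPerm n) : Decidable p.type1 := by
  unfold SignedPerm.type1; infer_instance
instance {n : ℕ} (p : SignedPerm n) : Decidable p.type01 := by
  unfold SignedPerm.type01; infer_instance
instance {n : ℕ} (p : SignedPerm n) : Decidable p.typeGe2 := by
  unfold SignedPerm.typeGe2; infer_instance
instance {n : ℕ} (p : SignedPerm n) : Decidable p.type0Ge2 := by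
  unfold SignedPerm.type0Ge2; infer_instance

end SignedPerm

/-- The type `D` Eulerian number `D_{n,k}`: the number of elements of `D_n`
with exactly `k` `D`-descents (zero for `k < 0`). -/
def eulerD (n : ℕ) (k : ℤ) : ℕ :=
  (Finset.univ.filter fun p : SignedPerm n => p.inD ∧ (p.d : ℤ) = k).card

/-- The sub-Eulerian number `D_{n,k}^1`. -/
def subEuler1 (n : ℕ) (k : ℤ) : ℕ :=
  (Finset.univ.filter fun p : SignedPerm n => p.inD ∧ p.type1 ∧ (p.d : ℤ) = k).card

/-- The sub-Eulerian number `D_{n,k}^{0,1}`. -/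
def subEuler01 (n : ℕ) (k : ℤ) : ℕ :=
  (Finset.univ.filter fun p : SignedPerm n => p.inD ∧ p.type01 ∧ (p.d : ℤ) = k).card

/-- The sub-Eulerian number `D_{n,k}^{≥2}`. -/
def subEulerGe2 (n : ℕ) (k : ℤ) : ℕ :=
  (Finset.univ.filter fun p : SignedPerm n => p.inD ∧ p.typeGe2 ∧ (p.d : ℤ) = k).card

/-- The sub-Eulerian number `D_{n,k}^{0,≥2}`. -/
def subEuler0Ge2 (n : ℕ) (k : ℤ) : ℕ :=
  (Finset.univ.filter fun p : SignedPerm n => p.inD ∧ p.type0Ge2 ∧ (p.d : ℤ) = k).card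

/-- The type `D` Eulerian polynomial `D_n(t) = Σ_{π ∈ D_n} t^{d(π)}`
(with `D_0(t) = D_1(t) = 1`). -/
noncomputable def polyD (n : ℕ) : Polynomial ℚ :=
  ∑ p ∈ Finset.univ.filter (fun p : SignedPerm n => p.inD), Polynomial.X ^ p.d

/-- The sub-Eulerian polynomial `D_n^1(t)`. -/
noncomputable def polyD1 (n : ℕ) : Polynomial ℚ :=
  ∑ p ∈ Finset.univ.filter (fun p : SignedPerm n => p.inD ∧ p.type1), Polynomial.X ^ p.d

/-- The sub-Eulerian polynomial `D_n^{0,1}(t)`. -/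
noncomputable def polyD01 (n : ℕ) : Polynomial ℚ :=
  ∑ p ∈ Finset.univ.filter (fun p : SignedPerm n => p.inD ∧ p.type01), Polynomial.X ^ p.d

/-- The sub-Eulerian polynomial `D_n^{≥2}(t)`. -/
noncomputable def polyDGe2 (n : ℕ) : Polynomial ℚ :=
  ∑ p ∈ Finset.univ.filter (fun p : SignedPerm n => p.inD ∧ p.typeGe2), Polynomial.X ^ p.d

/-- The sub-Eulerian polynomial `D_n^{0,≥2}(t)`. -/
noncomputable def polyD0Ge2 (n : ℕ) : Polynomial ℚ :=
  ∑ p ∈ Finset.univ.filter (fun p : SignedPerm n => p.inD ∧ p.type0Ge2), Polynomial.X ^ p.d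

/-!
The map `negTail` negates every letter of `π` except `π_1`, and for even `n` also toggles the sign
of the letter `±1`, so that it stays in `D_n`. Negating `π_i` and `π_{i+1}` reverses the comparison
at `i ≥ 2`, while at positions `0` and `1`, since `π_0 = -π_2` and `π_1` is kept, the descent at `0`
becomes the ascent at `1` and vice versa. The sign of `±1` never matters, since consecutive letters
have distinct absolute values. Hence `negTail` is an involution of `D_n` that complements the
descent set up to swapping `0` and `1`: it preserves the types '1' and '0,≥2' and sends `d` to
`n - d`.
-/

open Finset

section Involution

variable {α : Type*} {s : Finset α} {f : α → α}

theorem Finset.card_filter_eq_card_filter_sub_of_involutive {G : Type*} [AddCommGroup G]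
    [DecidableEq G] (hf : Function.Involutive f) (hs : ∀ x ∈ s, f x ∈ s) {d : α → G} {N : G}
    (hd : ∀ x ∈ s, d (f x) = N - d x) (k : G) :
    #{x ∈ s | d x = k} = #{x ∈ s | d x = N - k} := by
  have maps : ∀ {a b : G}, a + b = N → ∀ x ∈ {x ∈ s | d x = a}, f x ∈ {x ∈ s | d x = b} := by
    intro a b hab x hx
    rw [mem_filter] at hx ⊢
    refine ⟨hs x hx.1, ?_⟩
    rw [hd x hx.1, hx.2, ← hab, add_sub_cancel_left]
  exact card_bij' (fun x _ => f x) (fun x _ => f x) (maps (add_sub_cancel k N))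
    (maps (sub_add_cancel N k)) (fun x _ => hf x) (fun x _ => hf x)

theorem Finset.sum_pow_eq_pow_mul_sum_inv_pow {K : Type*} [Field K] (hf : Function.Involutive f)
    (hs : ∀ x ∈ s, f x ∈ s) {d : α → ℕ} {N : ℕ} (hd : ∀ x ∈ s, d (f x) + d x = N)
    {t : K} (ht : t ≠ 0) :
    ∑ x ∈ s, t ^ d x = t ^ N * ∑ x ∈ s, t⁻¹ ^ d x := by
  rw [mul_sum]
  refine sum_nbij' f f hs hs (fun x _ => hf x) (fun x _ => hf x) fun x hx => ?_
  rw [← hd (f x) (hs x hx), hf x, pow_add, inv_pow, mul_inv_cancel_right₀ (pow_ne_zero _ ht)]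

end Involution

theorem Finset.card_filter_xor_add_two_mul {ι : Type*} [Fintype ι] (a b : ι → Bool) :
    #{i | (a i ^^ b i) = true} + 2 * #{i | (a i && b i) = true} =
      #{i | a i = true} + #{i | b i = true} := by
  simp only [card_filter, mul_sum, ← sum_add_distrib]
  refine sum_congr rfl fun i _ => ?_
  cases a i <;> cases b i <;> rfl

theorem Finset.even_card_filter_xor_iff {ι : Type*} [Fintype ι] (a b : ι → Bool) :
    Even #{i | (a i ^^ b i) = true} ↔ (Even #{i | a i = true} ↔ Even #{i | b i = true}) := by
  have := card_filter_xor_add_two_mul a b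
  simp only [Nat.even_iff]
  omega

def EqOrBothUnits (x y : ℤ) : Prop := x = y ∨ (x.natAbs = 1 ∧ y.natAbs = 1)

theorem EqOrBothUnits.neg {x y : ℤ} (h : EqOrBothUnits x y) : EqOrBothUnits (-x) (-y) := by
  unfold EqOrBothUnits at *; omega

theorem EqOrBothUnits.lt_iff {a a' b b' : ℤ} (ha : EqOrBothUnits a' a) (hb : EqOrBothUnits b' b)
    (ha₀ : a ≠ 0) (hb₀ : b ≠ 0) (hab : a.natAbs ≠ b.natAbs) : a' < b' ↔ a < b := by
  unfold EqOrBothUnits at *; omega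

namespace SignedPerm

variable {n : ℕ} (p : SignedPerm n)

theorem word_succ (i : Fin n) :
    p.word (i + 1) = (if p.2 i then -1 else 1) * ((p.1 i : ℕ) + 1) := by
  rw [word, dif_pos ⟨by omega, i.isLt⟩]
  simp

theorem natAbs_word_succ (i : Fin n) : (p.word (i + 1)).natAbs = p.1 i + 1 := by
  rw [word_succ]; cases p.2 i <;> simp <;> omega

theorem entry_of_ne_zero {j : ℕ} (hj : j ≠ 0) : p.entry j = p.word j := if_neg hj

theorem entry_zero : p.entry 0 = -p.entry 2 := rfl

theorem mem_ddes {i : ℕ} : i ∈ p.ddes ↔ i < n ∧ p.entry (i + 1) < p.entry i := by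
  simp [ddes]

theorem d_le : p.d ≤ n :=
  (card_le_card (filter_subset _ _)).trans_eq (card_range n)

theorem natAbs_entry_succ (i : Fin n) : (p.entry (i + 1)).natAbs = p.1 i + 1 := by
  rw [entry_of_ne_zero p (by omega), natAbs_word_succ]

theorem natAbs_entry_zero (hn : 2 ≤ n) : (p.entry 0).natAbs = p.1 ⟨1, hn⟩ + 1 := by
  rw [entry_zero, Int.natAbs_neg, natAbs_entry_succ p ⟨1, hn⟩]

theorem entry_ne_zero (hn : 2 ≤ n) {j : ℕ} (hj : j ≤ n) : p.entry j ≠ 0 := by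
  rw [← Int.natAbs_ne_zero]
  rcases j with _ | j
  · rw [natAbs_entry_zero p hn]; omega
  · rw [natAbs_entry_succ p ⟨j, hj⟩]; omega

theorem natAbs_entry_ne_succ (hn : 2 ≤ n) {i : ℕ} (hi : i < n) :
    (p.entry i).natAbs ≠ (p.entry (i + 1)).natAbs := by
  have hne {a b : Fin n} (h : (a : ℕ) ≠ b) : (p.1 a : ℕ) ≠ p.1 b :=
    Fin.val_ne_of_ne (p.1.injective.ne (Fin.ne_of_val_ne h))
  rcases i with _ | i
  · rw [natAbs_entry_zero p hn, natAbs_entry_succ p ⟨0, hi⟩]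
    exact fun h => hne (a := ⟨1, hn⟩) (b := ⟨0, hi⟩) one_ne_zero (by omega)
  · rw [natAbs_entry_succ p ⟨i, by omega⟩, natAbs_entry_succ p ⟨i + 1, hi⟩]
    exact fun h => hne (a := ⟨i, by omega⟩) (b := ⟨i + 1, hi⟩) (by simp) (by omega)

def negTail : SignedPerm n :=
  (p.1, fun i => p.2 i ^^ (decide ((i : ℕ) ≠ 0) ^^ (decide (Even n) && decide ((p.1 i : ℕ) = 0))))

theorem negTail_involutive : Function.Involutive (negTail (n := n)) := by
  intro p
  refine Prod.ext rfl (funext fun i => ?_)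
  simp [negTail]

theorem word_negTail (i : Fin n) :
    EqOrBothUnits ((negTail p).word (i + 1))
      (if (i : ℕ) = 0 then p.word (i + 1) else -p.word (i + 1)) := by
  rw [word_succ, word_succ]
  unfold EqOrBothUnits negTail
  by_cases hi : (i : ℕ) = 0 <;> by_cases h1 : (p.1 i : ℕ) = 0 <;>
    cases hs : p.2 i <;> by_cases he : Even n <;> simp [hi, h1, hs, he]

theorem entry_negTail (hn : 2 ≤ n) {j : ℕ} (hj : j ≤ n) :
    EqOrBothUnits ((negTail p).entry j) ((if j = 1 then 1 else -1) * p.entry j) := by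
  rcases j with _ | j
  · simpa [entry_zero, entry_of_ne_zero] using (word_negTail p ⟨1, hn⟩).neg
  · simpa [entry_of_ne_zero] using word_negTail p ⟨j, hj⟩

theorem swap_zero_one_lt (hn : 2 ≤ n) {i : ℕ} (hi : i < n) : Equiv.swap 0 1 i < n := by
  rw [Equiv.swap_apply_def]; split_ifs <;> omega

theorem mem_ddes_negTail (hn : 2 ≤ n) {i : ℕ} :
    i ∈ (negTail p).ddes ↔ i < n ∧ Equiv.swap 0 1 i ∉ p.ddes := by
  simp only [mem_ddes, not_and, not_lt]
  refine and_congr_right fun hi => ?_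
  have natAbs_sign_mul (j : ℕ) :
      ((if j = 1 then 1 else -1) * p.entry j).natAbs = (p.entry j).natAbs := by
    split_ifs <;> simp
  have sign_mul_ne_zero {j : ℕ} (hj : j ≤ n) : (if j = 1 then 1 else -1) * p.entry j ≠ 0 :=
    mul_ne_zero (by split_ifs <;> norm_num) (p.entry_ne_zero hn hj)
  rw [(entry_negTail p hn hi).lt_iff (entry_negTail p hn hi.le) (sign_mul_ne_zero hi)
    (sign_mul_ne_zero hi.le)
    (by rw [natAbs_sign_mul, natAbs_sign_mul]; exact (natAbs_entry_ne_succ p hn hi).symm)]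
  have hswap := natAbs_entry_ne_succ p hn (swap_zero_one_lt hn hi)
  obtain rfl | rfl | hi₂ : i = 0 ∨ i = 1 ∨ 2 ≤ i := by omega
  · simp only [Equiv.swap_apply_left, Nat.reduceAdd, Nat.succ_eq_add_one, zero_add, ↓reduceIte,
      one_mul, zero_ne_one, entry_zero, neg_mul, neg_neg] at hswap ⊢
    omega
  · simp only [Equiv.swap_apply_right, entry_zero, Int.natAbs_neg, zero_add, Nat.succ_eq_add_one,
      Nat.reduceAdd, OfNat.ofNat_ne_one, ↓reduceIte, neg_mul, one_mul] at hswap ⊢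
    omega
  · rw [Equiv.swap_apply_of_ne_of_ne (by omega) (by omega)] at hswap ⊢
    simp only [if_neg (show i ≠ 1 by omega), if_neg (show i + 1 ≠ 1 by omega), neg_one_mul,
      Nat.succ_eq_add_one]
    omega

theorem ddes_negTail (hn : 2 ≤ n) :
    (negTail p).ddes = range n \ p.ddes.map (Equiv.swap 0 1).toEmbedding := by
  ext i
  simp only [mem_ddes_negTail p hn, mem_sdiff, mem_range, mem_map_equiv, Equiv.symm_swap]

theorem d_negTail_add_d (hn : 2 ≤ n) : (negTail p).d + p.d = n := by
  have hsub : p.ddes.map (Equiv.swap 0 1).toEmbedding ⊆ range n := by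
    intro i hi
    rw [mem_map_equiv, Equiv.symm_swap] at hi
    simpa using swap_zero_one_lt hn ((mem_ddes p).1 hi).1
  have hle : #p.ddes ≤ n := p.d_le
  rw [d, d, ddes_negTail p hn, card_sdiff_of_subset hsub, card_range, card_map]
  omega

theorem type1_negTail (hn : 2 ≤ n) : (negTail p).type1 ↔ p.type1 := by
  simp only [type1, mem_ddes_negTail p hn, Equiv.swap_apply_left, Equiv.swap_apply_right,
    show 0 < n by omega, show 1 < n from hn, true_and]
  tauto

theorem type0Ge2_negTail (hn : 2 ≤ n) : (negTail p).type0Ge2 ↔ p.type0Ge2 := by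
  simp only [type0Ge2, mem_ddes_negTail p hn, Equiv.swap_apply_left, Equiv.swap_apply_right,
    show 0 < n by omega, show 1 < n from hn, true_and]
  tauto

theorem even_card_negTail_flips :
    Even #{i : Fin n |
      (decide ((i : ℕ) ≠ 0) ^^ (decide (Even n) && decide ((p.1 i : ℕ) = 0))) = true} := by
  rw [even_card_filter_xor_iff]
  rcases n with _ | n
  · simp
  have card_pos_ne_zero : #{i : Fin (n + 1) | decide ((i : ℕ) ≠ 0) = true} = n := by
    simp [Fin.val_eq_zero_iff, filter_ne']
  have card_letter_one : #{i : Fin (n + 1) | decide ((p.1 i : ℕ) = 0) = true} = 1 := by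
    simp [Fin.val_eq_zero_iff, ← Equiv.eq_symm_apply, filter_eq']
  by_cases he : Even (n + 1)
  · simp only [he, decide_true, Bool.true_and, card_pos_ne_zero, card_letter_one]
    simpa using Nat.even_add_one.1 he
  · simp only [he, decide_false, Bool.false_and, card_pos_ne_zero]
    simpa [Nat.even_add_one] using he

theorem inD_negTail : (negTail p).inD ↔ p.inD := by
  unfold inD negTail
  rw [even_card_filter_xor_iff]
  simp only [even_card_negTail_flips, iff_true]

section Preserved

variable {T : SignedPerm n → Prop} [DecidablePred T]

theorem negTail_mem_filter_inD_and (hT : ∀ p, T (negTail p) ↔ T p) {p : SignedPerm n}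
    (hp : p ∈ ({p | p.inD ∧ T p} : Finset (SignedPerm n))) :
    negTail p ∈ ({p | p.inD ∧ T p} : Finset (SignedPerm n)) := by
  simpa [inD_negTail, hT] using hp

theorem card_filter_d_eq_card_filter_d_sub (hn : 2 ≤ n) (hT : ∀ p, T (negTail p) ↔ T p)
    (k : ℤ) :
    #{p : SignedPerm n | p.inD ∧ T p ∧ (p.d : ℤ) = k} =
      #{p : SignedPerm n | p.inD ∧ T p ∧ (p.d : ℤ) = n - k} := by
  have d_negTail (p : SignedPerm n) : ((negTail p).d : ℤ) = n - p.d := by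
    have := d_negTail_add_d p hn
    omega
  simpa only [filter_filter, and_assoc] using
    card_filter_eq_card_filter_sub_of_involutive negTail_involutive
      (fun _ => negTail_mem_filter_inD_and hT) (fun p _ => d_negTail p) k

theorem sum_pow_d_eq_pow_mul_sum_inv_pow_d (hn : 2 ≤ n) (hT : ∀ p, T (negTail p) ↔ T p)
    {t : ℚ} (ht : t ≠ 0) :
    ∑ p : SignedPerm n with p.inD ∧ T p, t ^ p.d =
      t ^ n * ∑ p : SignedPerm n with p.inD ∧ T p, t⁻¹ ^ p.d :=
  sum_pow_eq_pow_mul_sum_inv_pow negTail_involutive (fun _ => negTail_mem_filter_inD_and hT)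
    (fun p _ => d_negTail_add_d p hn) ht

end Preserved

end SignedPerm

open SignedPerm in
/-- **Corollary 4.3 (iv)–(v).** `D_{n,k}^{0,≥2} = D_{n,n-k}^{0,≥2}` and
`D_{n,k}^1 = D_{n,n-k}^1` for `0 ≤ k ≤ n`; i.e. `D_n^{0,≥2}(t) = t^n·D_n^{0,≥2}(t⁻¹)`
and `D_n^1(t) = t^n·D_n^1(t⁻¹)` (both polynomials are palindromic). -/
theorem subEuler0Ge2_palindromic (n : ℕ) (hn : 2 ≤ n) :
    (∀ k : ℕ, k ≤ n → subEuler0Ge2 n k = subEuler0Ge2 n ((n : ℤ) - k)) ∧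
    (∀ k : ℕ, k ≤ n → subEuler1 n k = subEuler1 n ((n : ℤ) - k)) ∧
    (∀ t : ℚ, t ≠ 0 → (polyD0Ge2 n).eval t = t ^ n * (polyD0Ge2 n).eval t⁻¹) ∧
    (∀ t : ℚ, t ≠ 0 → (polyD1 n).eval t = t ^ n * (polyD1 n).eval t⁻¹) := by
  have h0Ge2 (p : SignedPerm n) := type0Ge2_negTail p hn
  have h1 (p : SignedPerm n) := type1_negTail p hn
  refine ⟨fun k _ => card_filter_d_eq_card_filter_d_sub hn h0Ge2 k,
    fun k _ => card_filter_d_eq_card_filter_d_sub hn h1 k, fun t ht => ?_, fun t ht => ?_⟩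
  all_goals
    simp only [polyD0Ge2, polyD1, Polynomial.eval_finsetSum, Polynomial.eval_pow,
      Polynomial.eval_X]
  exacts [sum_pow_d_eq_pow_mul_sum_inv_pow_d hn h0Ge2 ht,
    sum_pow_d_eq_pow_mul_sum_inv_pow_d hn h1 ht]
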